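/- The tensor product over ℝ of two Weil ℝ-algebras is again a Weil ℝ-algebra; i.e., if W₁ and W₂ are finite-dimensional commutative local ℝ-algebras with residue field ℝ, then W₁ ⊗_ℝ W₂ is a finite-dimensional commutative local ℝ-algebra with residue field ℝ. -/

import Mathlib

open CategoryTheory CategoryTheory.Limits TensorProduct

noncomputable section

/-- A commutative `ℝ`-algebra is a *Weil algebra* if it is finite-dimensional, local,
with nilpotent maximal ideal and residue field `ℝ`. -/
def WeilPred (A : Type) [CommRing A] [Algebra ℝ A] : Prop :=
  FiniteDimensional ℝ A ∧ ∃ h : IsLocalRing A,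
    letI := h
    IsNilpotent (IsLocalRing.maximalIdeal A) ∧
      Function.Bijective (algebraMap ℝ (IsLocalRing.ResidueField A))

/-- Weil algebras as objects of the category `Under (CommRingCat.of ℝ)` of
commutative `ℝ`-algebras. -/
def IsWeil (A : Under (CommRingCat.of ℝ)) : Prop :=
  letI : Algebra ℝ A.right := A.hom.hom.toAlgebra
  WeilPred A.right

/-- The category `𝔚` of Weil `ℝ`-algebras. -/
abbrev WeilCat := ObjectProperty.FullSubcategory IsWeil

/-- The category of Weil spaces: functors `𝔚 ⥤ Sets`. -/
abbrev WeilSpace := WeilCat ⥤ Type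

end

/-!
A Weil algebra is the same thing as a finite-dimensional `ℝ`-algebra with an augmentation
`ε : A →ₐ[ℝ] ℝ` whose kernel is nil: the kernel of a surjection onto a field is maximal, and if it
is nil it lies in every prime, so it is the unique maximal ideal. Finite dimension is preserved by
`⊗`, augmentations tensor to the augmentation `ε₁ ⊗ ε₂`, and its kernel is generated by
`ker ε₁ ⊗ 1` and `1 ⊗ ker ε₂` (right exactness of `⊗`), hence is again nil.
-/
theorem Ideal.map_le_nilradical {R S F : Type*} [CommRing R] [CommRing S] [FunLike F R S]
    [RingHomClass F R S] (f : F) {I : Ideal R} (hI : I ≤ nilradical R) :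
    I.map f ≤ nilradical S :=
  Ideal.map_le_iff_le_comap.2 fun _ hx ↦ mem_nilradical.2 ((mem_nilradical.1 (hI hx)).map f)

theorem Algebra.TensorProduct.ker_map_le_nilradical {R A B C D : Type*} [CommRing R]
    [CommRing A] [CommRing B] [CommRing C] [CommRing D] [Algebra R A] [Algebra R B]
    [Algebra R C] [Algebra R D] {f : A →ₐ[R] C} {g : B →ₐ[R] D}
    (hf : Function.Surjective f) (hg : Function.Surjective g)
    (hf' : RingHom.ker f ≤ nilradical A) (hg' : RingHom.ker g ≤ nilradical B) :
    RingHom.ker (map f g) ≤ nilradical (A ⊗[R] B) := by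
  rw [map_ker f g hf hg]
  exact sup_le (Ideal.map_le_nilradical _ hf') (Ideal.map_le_nilradical _ hg')

theorem AlgHom.surjective_onto_base {R A : Type*} [CommSemiring R] [Semiring A]
    [Algebra R A] (ε : A →ₐ[R] R) : Function.Surjective ε :=
  fun r ↦ ⟨algebraMap R A r, ε.commutes r⟩

theorem IsLocalRing.of_surjective_of_ker_le_nilradical {A K : Type*} [CommRing A] [Field K]
    (f : A →+* K) (hf : Function.Surjective f) (h : RingHom.ker f ≤ nilradical A) :
    IsLocalRing A :=
  have hmax := RingHom.ker_isMaximal_of_surjective f hf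
  of_unique_max_ideal ⟨RingHom.ker f, hmax, fun m hm ↦
    (hmax.eq_of_le hm.ne_top (h.trans (nilradical_le_prime m))).symm⟩

theorem IsLocalRing.bijective_algebraMap_residueField {k A : Type*} [Field k] [CommRing A]
    [IsLocalRing A] [Algebra k A] (ε : A →ₐ[k] k) :
    Function.Bijective (algebraMap k (ResidueField A)) := by
  refine ⟨(algebraMap k _).injective, fun y ↦ ?_⟩
  obtain ⟨x, rfl⟩ := residue_surjective y
  refine ⟨ε x, ?_⟩
  rw [IsScalarTower.algebraMap_apply k A, ResidueField.algebraMap_eq, ← sub_eq_zero, ← map_sub,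
    residue_eq_zero_iff, ← ker_eq_maximalIdeal (ε : A →+* k) ε.surjective_onto_base, RingHom.mem_ker]
  simp

theorem weilPred_iff (A : Type) [CommRing A] [Algebra ℝ A] :
    WeilPred A ↔ FiniteDimensional ℝ A ∧ ∃ ε : A →ₐ[ℝ] ℝ, RingHom.ker ε ≤ nilradical A := by
  constructor
  · rintro ⟨hfd, hloc, hnil, hbij⟩
    have : IsNoetherianRing A := isNoetherian_of_tower ℝ inferInstance
    let e := AlgEquiv.ofBijective (Algebra.ofId ℝ (IsLocalRing.ResidueField A)) hbij
    refine ⟨hfd, e.symm.toAlgHom.comp (IsScalarTower.toAlgHom ℝ A _), fun x hx ↦ ?_⟩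
    have hx : IsLocalRing.residue A x = 0 := by simpa using hx
    rw [IsLocalRing.residue_eq_zero_iff] at hx
    exact (Ideal.FG.isNilpotent_iff_le_nilradical (IsNoetherian.noetherian _)).1 hnil hx
  · rintro ⟨hfd, ε, h⟩
    have hε := ε.surjective_onto_base
    have : IsNoetherianRing A := isNoetherian_of_tower ℝ inferInstance
    have hloc := IsLocalRing.of_surjective_of_ker_le_nilradical (ε : A →+* ℝ) hε h
    refine ⟨hfd, hloc, ?_, IsLocalRing.bijective_algebraMap_residueField ε⟩
    rw [← IsLocalRing.ker_eq_maximalIdeal (ε : A →+* ℝ) hε]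
    exact (Ideal.FG.isNilpotent_iff_le_nilradical (IsNoetherian.noetherian _)).2 h

/-- the tensor product over `ℝ` of two Weil `ℝ`-algebras is a Weil `ℝ`-algebra. -/
theorem tensorProduct_isWeil (W₁ W₂ : Type) [CommRing W₁] [CommRing W₂]
    [Algebra ℝ W₁] [Algebra ℝ W₂] (h₁ : WeilPred W₁) (h₂ : WeilPred W₂) :
    WeilPred (W₁ ⊗[ℝ] W₂) := by
  obtain ⟨_, ε₁, hε₁⟩ := (weilPred_iff W₁).1 h₁
  obtain ⟨_, ε₂, hε₂⟩ := (weilPred_iff W₂).1 h₂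
  refine (weilPred_iff _).2 ⟨inferInstance, (Algebra.TensorProduct.lid ℝ ℝ).toAlgHom.comp
    (Algebra.TensorProduct.map ε₁ ε₂), fun x hx ↦ ?_⟩
  exact Algebra.TensorProduct.ker_map_le_nilradical ε₁.surjective_onto_base
    ε₂.surjective_onto_base hε₁ hε₂ (by simpa using hx)
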